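/- Let φ₁, φ₂, ψ₁, ψ₂ : ℤ² → ℂ and α, β, γ, δ : ℤ² → ℝ satisfy, at every point (n,m) ∈ ℤ², the discrete Dirac equations φ₁(n,m+1) = α·φ₁ + β·ψ₁, ψ₁(n+1,m) = γ·φ₁ + δ·ψ₁, φ₂(n,m+1) = δ·φ₂ + γ·ψ₂, ψ₂(n+1,m) = β·φ₂ + α·ψ₂, together with α·δ − β·γ = 1. Define F, G : ℤ² → ℝ⁴ by F(n,m) = (Re(φ₁φ₂), −Im(φ₁φ₂), Re(φ₁·conj(φ₂)), −Im(φ₁·conj(φ₂))) and G(n,m) by the same formulas with ψ₁, ψ₂ in place of φ₁, φ₂. Then the consistency condition F(n,m+1) − F(n,m) = G(n+1,m) − G(n,m) holds for all (n,m) ∈ ℤ², so that F and G are the edge functions of a discrete surface X : ℤ² → ℝ⁴ (unique up to translation). -/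

import Mathlib

/-!
By the Dirac equations, the increment of `φ₁φ₂` along a vertical edge minus the increment of
`ψ₁ψ₂` along the adjacent horizontal edge equals `(αδ - βγ - 1)(φ₁φ₂ - ψ₁ψ₂)`, which vanishes.
The coefficients are real, so the same holds with `φ₂, ψ₂` replaced by their conjugates. Hence
`(F, G)` has vanishing discrete curl, and on `ℤ²` such a pair is the gradient of a potential,
obtained by summing `F` along the axis `m = 0` and then `G` along the vertical lines.
-/

open Finset

lemma eq_of_forall_add_one_eq {α : Type*} {g : ℤ → α} (h : ∀ m, g (m + 1) = g m) (m : ℤ) :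
    g m = g 0 := by
  have hper : Function.Periodic g 1 := h
  simpa using hper.zsmul m 0

section DiscretePotential

variable {M : Type*} [AddCommGroup M]

noncomputable def discretePrimitive (f : ℤ → M) (n : ℤ) : M :=
  ∑ i ∈ Ico 0 n, f i - ∑ i ∈ Ico n 0, f i

@[simp]
lemma discretePrimitive_zero (f : ℤ → M) : discretePrimitive f 0 = 0 := by
  simp [discretePrimitive]

lemma discretePrimitive_add_one (f : ℤ → M) (n : ℤ) :
    discretePrimitive f (n + 1) = discretePrimitive f n + f n := by
  rcases le_or_gt 0 n with hn | hn
  · simp only [discretePrimitive, Ico_eq_empty_of_le hn,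
      Ico_eq_empty_of_le (by omega : 0 ≤ n + 1), sum_empty, sub_zero, ← sum_Ico_add_eq_sum_Ico_add_one hn]
  · have hsplit : insert n (Ico (n + 1) 0) = Ico n 0 := by
      simpa using insert_Ico_left_eq_Ico_sub_one (show n + 1 ≤ 0 by omega)
    simp only [discretePrimitive, Ico_eq_empty_of_le hn.le,
      Ico_eq_empty_of_le (by omega : n + 1 ≤ 0), sum_empty, zero_sub, ← hsplit, sum_insert (by simp : n ∉ Ico (n + 1) 0)]
    abel

theorem exists_potential_of_closed (F G : ℤ × ℤ → M)
    (hclosed : ∀ n m : ℤ, F (n, m + 1) - F (n, m) = G (n + 1, m) - G (n, m)) :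
    ∃ X : ℤ × ℤ → M, ∀ n m : ℤ,
      F (n, m) = X (n + 1, m) - X (n, m) ∧ G (n, m) = X (n, m + 1) - X (n, m) := by
  refine ⟨fun p => discretePrimitive (fun k => F (k, 0)) p.1 +
    discretePrimitive (fun j => G (p.1, j)) p.2, fun n m => ⟨?_, ?_⟩⟩
  · set D : ℤ → M := fun k => discretePrimitive (fun j => G (n + 1, j)) k -
      discretePrimitive (fun j => G (n, j)) k - F (n, k) with hD
    have hstep : ∀ k, D (k + 1) = D k := fun k => by
      simp only [hD, discretePrimitive_add_one]
      linear_combination (norm := abel) -hclosed n k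
    have hshift : D m = -F (n, 0) := by
      simpa [hD] using eq_of_forall_add_one_eq hstep m
    simp only [hD] at hshift
    simp only [discretePrimitive_add_one]
    linear_combination (norm := abel) -hshift
  · simp only [discretePrimitive_add_one]
    abel

end DiscretePotential

lemma dirac_mul_consistency {R : Type*} [CommRing R] {a b c d x y u v : R}
    (hdet : a * d - b * c = 1) :
    (a * x + b * y) * (d * u + c * v) - x * u = (c * x + d * y) * (b * u + a * v) - y * v := by
  linear_combination (x * u - y * v) * hdet

def reNegImCoords (p q : ℂ) : ℝ × ℝ × ℝ × ℝ := (p.re, -p.im, q.re, -q.im)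

lemma reNegImCoords_sub (p q p' q' : ℂ) :
    reNegImCoords p q - reNegImCoords p' q' = reNegImCoords (p - p') (q - q') := by
  simp only [reNegImCoords, Prod.mk_sub_mk, Complex.sub_re, Complex.sub_im]
  ring_nf

/-- Solutions of the discrete Dirac equations in the ℝ^{2,2} case satisfy the
consistency condition, so the edge functions F, G integrate to a discrete surface
X : ℤ² → ℝ⁴ (unique up to translation). -/
theorem discrete_weierstrass_R22_consistency
    (φ₁ φ₂ ψ₁ ψ₂ : ℤ × ℤ → ℂ) (α β γ δ : ℤ × ℤ → ℝ)
    (hφ₁ : ∀ n m : ℤ, φ₁ (n, m + 1) =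
      (α (n, m) : ℂ) * φ₁ (n, m) + (β (n, m) : ℂ) * ψ₁ (n, m))
    (hψ₁ : ∀ n m : ℤ, ψ₁ (n + 1, m) =
      (γ (n, m) : ℂ) * φ₁ (n, m) + (δ (n, m) : ℂ) * ψ₁ (n, m))
    (hφ₂ : ∀ n m : ℤ, φ₂ (n, m + 1) =
      (δ (n, m) : ℂ) * φ₂ (n, m) + (γ (n, m) : ℂ) * ψ₂ (n, m))
    (hψ₂ : ∀ n m : ℤ, ψ₂ (n + 1, m) =
      (β (n, m) : ℂ) * φ₂ (n, m) + (α (n, m) : ℂ) * ψ₂ (n, m))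
    (hdet : ∀ n m : ℤ, α (n, m) * δ (n, m) - β (n, m) * γ (n, m) = 1)
    (F G : ℤ × ℤ → ℝ × ℝ × ℝ × ℝ)
    (hF : ∀ n m : ℤ, F (n, m) =
      ((φ₁ (n, m) * φ₂ (n, m)).re, -(φ₁ (n, m) * φ₂ (n, m)).im,
       (φ₁ (n, m) * (starRingEnd ℂ) (φ₂ (n, m))).re,
       -(φ₁ (n, m) * (starRingEnd ℂ) (φ₂ (n, m))).im))
    (hG : ∀ n m : ℤ, G (n, m) =
      ((ψ₁ (n, m) * ψ₂ (n, m)).re, -(ψ₁ (n, m) * ψ₂ (n, m)).im,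
       (ψ₁ (n, m) * (starRingEnd ℂ) (ψ₂ (n, m))).re,
       -(ψ₁ (n, m) * (starRingEnd ℂ) (ψ₂ (n, m))).im)) :
    (∀ n m : ℤ, F (n, m + 1) - F (n, m) = G (n + 1, m) - G (n, m)) ∧
    ∃ X : ℤ × ℤ → ℝ × ℝ × ℝ × ℝ, ∀ n m : ℤ,
      F (n, m) = X (n + 1, m) - X (n, m) ∧ G (n, m) = X (n, m + 1) - X (n, m) := by
  have hclosed : ∀ n m : ℤ, F (n, m + 1) - F (n, m) = G (n + 1, m) - G (n, m) := by
    intro n m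
    have hdetℂ : (α (n, m) * δ (n, m) - β (n, m) * γ (n, m) : ℂ) = 1 := by
      exact_mod_cast hdet n m
    have hprod := dirac_mul_consistency (x := φ₁ (n, m)) (y := ψ₁ (n, m))
      (u := φ₂ (n, m)) (v := ψ₂ (n, m)) hdetℂ
    have hconj := dirac_mul_consistency (x := φ₁ (n, m)) (y := ψ₁ (n, m))
      (u := starRingEnd ℂ (φ₂ (n, m))) (v := starRingEnd ℂ (ψ₂ (n, m))) hdetℂ
    have hF' : ∀ n m, F (n, m) = reNegImCoords (φ₁ (n, m) * φ₂ (n, m))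
        (φ₁ (n, m) * starRingEnd ℂ (φ₂ (n, m))) := hF
    have hG' : ∀ n m, G (n, m) = reNegImCoords (ψ₁ (n, m) * ψ₂ (n, m))
        (ψ₁ (n, m) * starRingEnd ℂ (ψ₂ (n, m))) := hG
    rw [hF', hF', hG', hG', reNegImCoords_sub, reNegImCoords_sub, hφ₁, hφ₂, hψ₁, hψ₂]
    simp only [map_add, map_mul, Complex.conj_ofReal]
    rw [hprod, hconj]
  exact ⟨hclosed, exists_potential_of_closed F G hclosed⟩
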